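/- Let F be a finite signature, ≿ a precedence on F, and A a simple monotone well-founded ordered F-algebra. Then the weighted path order >_wpo induced by A and ≿ is a reduction order, i.e. a well-founded strict order on terms that is closed under contexts and closed under substitutions. -/

import Mathlib

/-!
Transitivity (by induction on the total size of the three terms) and closure under substitutions
(by induction on derivations) are checked rule by rule from the same properties of `≥_A`. Closure
under contexts is an instance of rule (2b-ii) with equal root symbols: weak monotonicity gives
`f(…, s, …) ≥_A f(…, t, …)` and simplicity `f(…, s, …) ≥_A s`.

For well-foundedness fix one assignment `α₀`. A term `g(s₁, …, sₙ)` with accessible arguments is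
accessible, by induction on `[α₀](g(s₁, …, sₙ))` under `>`, then on `g` under `≻`, then on
`(s₁, …, sₙ)` under the lexicographic extension, which is well-founded on tuples of accessible
terms because a finite signature bounds the arities: a `>_wpo`-step either descends through an
argument, or lowers `[α₀]`, or keeps it and lowers the root in `≻`, or keeps both and lowers the
arguments. As the algebra is simple, `[α₀](sᵢ) ≤ [α₀](g(s₁, …, sₙ))`, so induction on `[α₀](t)`
and then on `t` reaches every term.
-/

/-- First-order terms over a signature `F` with arity function `ar` and variables `V`. -/
inductive Term (F : Type) (ar : F → ℕ) (V : Type) : Type where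
  | var : V → Term F ar V
  | app : (f : F) → (Fin (ar f) → Term F ar V) → Term F ar V

namespace Term

variable {F V : Type} {ar : F → ℕ}

/-- Application of a substitution `σ : V → Term F ar V` to a term. -/
def subst (σ : V → Term F ar V) : Term F ar V → Term F ar V
  | var v => σ v
  | app f args => app f (fun i => (args i).subst σ)

/-- Interpretation of a term in an `F`-algebra with carrier `A` under assignment `α`. -/
def eval {A : Type} (I : (f : F) → (Fin (ar f) → A) → A) (α : V → A) :
    Term F ar V → A
  | var v => α v
  | app f args => I f (fun i => (args i).eval I α)

/-- A term is a non-variable term (function application). -/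
def IsApp : Term F ar V → Prop
  | var _ => False
  | app _ _ => True

end Term

section Algebra

variable {F V A : Type}

/-- `RC lt a b` : reflexive closure of the strict order `lt`, i.e. `a ≤ b`. -/
def RC (lt : A → A → Prop) (a b : A) : Prop := lt a b ∨ a = b

variable (ar : F → ℕ) (I : (f : F) → (Fin (ar f) → A) → A) (lt : A → A → Prop)

/-- `s >_A t` : `[α](t) < [α](s)` for every assignment `α`. -/
def GTA (s t : Term F ar V) : Prop := ∀ α : V → A, lt (t.eval I α) (s.eval I α)

/-- `s ≥_A t` : `[α](t) ≤ [α](s)` for every assignment `α`. -/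
def GEA (s t : Term F ar V) : Prop := ∀ α : V → A, RC lt (t.eval I α) (s.eval I α)

/-- The algebra is simple: `f_A(a_1, …, a_n) ≥ a_i`. -/
def Simple : Prop := ∀ (f : F) (as : Fin (ar f) → A) (i : Fin (ar f)), RC lt (as i) (I f as)

/-- The algebra is weakly monotone: `a_i > b` implies
`f_A(a_1,…,a_i,…,a_n) ≥ f_A(a_1,…,b,…,a_n)`. -/
def WeaklyMonotone : Prop :=
  ∀ (f : F) (as : Fin (ar f) → A) (i : Fin (ar f)) (b : A),
    lt b (as i) → RC lt (I f (Function.update as i b)) (I f as)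

end Algebra

section WPO

variable {F V A : Type} (ar : F → ℕ) (I : (f : F) → (Fin (ar f) → A) → A)
  (lt : A → A → Prop) (prec : F → F → Prop)

mutual
  /-- The weighted path order induced by the algebra `(A, I, lt)` and the precedence `prec`. -/
  inductive WPO : Term F ar V → Term F ar V → Prop where
    /-- (1) `s >_A t`. -/
    | alg {s t} : GTA ar I lt s t → WPO s t
    /-- (2a) `s ≥_A t` and `s_i >_wpo t`. -/
    | sub {f ss t} (i : Fin (ar f)) :
        GEA ar I lt (Term.app f ss) t → WPO (ss i) t → WPO (Term.app f ss) t
    /-- (2a) `s ≥_A t` and `s_i = t`. -/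
    | subEq {f ss t} (i : Fin (ar f)) :
        GEA ar I lt (Term.app f ss) t → ss i = t → WPO (Term.app f ss) t
    /-- (2b-i) `s ≥_A t`, `s >_wpo t_j` for all `j`, and `f ≻ g`. -/
    | prc {f ss g ts} :
        GEA ar I lt (Term.app f ss) (Term.app g ts) →
        (∀ j, WPO (Term.app f ss) (ts j)) →
        prec f g → ¬ prec g f → WPO (Term.app f ss) (Term.app g ts)
    /-- (2b-ii) `s ≥_A t`, `s >_wpo t_j` for all `j`, `f ≿ g` and lex comparison of arguments. -/
    | lex {f ss g ts} :
        GEA ar I lt (Term.app f ss) (Term.app g ts) →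
        (∀ j, WPO (Term.app f ss) (ts j)) →
        prec f g → WPOLex (List.ofFn ss) (List.ofFn ts) →
        WPO (Term.app f ss) (Term.app g ts)

  /-- Lexicographic extension of `WPO` to argument lists (of possibly different lengths). -/
  inductive WPOLex : List (Term F ar V) → List (Term F ar V) → Prop where
    | head {s t l₁ l₂} : WPO s t → WPOLex (s :: l₁) (t :: l₂)
    | tail {s l₁ l₂} : WPOLex l₁ l₂ → WPOLex (s :: l₁) (s :: l₂)
    | longer {s l₁} : WPOLex (s :: l₁) []
end

end WPO

section SPO

variable {F V : Type} {ar : F → ℕ} (qge qgt : Term F ar V → Term F ar V → Prop)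

mutual
  /-- The semantic path order induced by the order pair `(qge, qgt)` (`⊒∼`, `⊐`). -/
  inductive SPO : Term F ar V → Term F ar V → Prop where
    /-- (1) `s_i >_spo t`. -/
    | sub {f ss t} (i : Fin (ar f)) : SPO (ss i) t → SPO (Term.app f ss) t
    /-- (1) `s_i = t`. -/
    | subEq {f ss t} (i : Fin (ar f)) : ss i = t → SPO (Term.app f ss) t
    /-- (2a) `s >_spo t_j` for all `j` and `s ⊐ t`. -/
    | gt {f ss g ts} : (∀ j, SPO (Term.app f ss) (ts j)) →
        qgt (Term.app f ss) (Term.app g ts) → SPO (Term.app f ss) (Term.app g ts)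
    /-- (2b) `s >_spo t_j` for all `j`, `s ⊒∼ t` and lex comparison of arguments. -/
    | lex {f ss g ts} : (∀ j, SPO (Term.app f ss) (ts j)) →
        qge (Term.app f ss) (Term.app g ts) →
        SPOLex (List.ofFn ss) (List.ofFn ts) → SPO (Term.app f ss) (Term.app g ts)

  /-- Lexicographic extension of `SPO` to argument lists. -/
  inductive SPOLex : List (Term F ar V) → List (Term F ar V) → Prop where
    | head {s t l₁ l₂} : SPO s t → SPOLex (s :: l₁) (t :: l₂)
    | tail {s l₁ l₂} : SPOLex l₁ l₂ → SPOLex (s :: l₁) (s :: l₂)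
    | longer {s l₁} : SPOLex (s :: l₁) []
end

end SPO

section Props

variable {F V : Type} {ar : F → ℕ}

/-- Closure under contexts: replacing one argument. -/
def ClosedCtx (R : Term F ar V → Term F ar V → Prop) : Prop :=
  ∀ (f : F) (args : Fin (ar f) → Term F ar V) (i : Fin (ar f)) (s t : Term F ar V),
    R s t → R (Term.app f (Function.update args i s)) (Term.app f (Function.update args i t))

/-- Closure under substitutions. -/
def ClosedSubst (R : Term F ar V → Term F ar V → Prop) : Prop :=
  ∀ (σ : V → Term F ar V) (s t : Term F ar V), R s t → R (s.subst σ) (t.subst σ)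

/-- A reduction order: a well-founded strict order closed under contexts and substitutions. -/
def ReductionOrder (R : Term F ar V → Term F ar V → Prop) : Prop :=
  (∀ s, ¬ R s s) ∧ Transitive R ∧ WellFounded (fun s t => R t s) ∧
    ClosedCtx R ∧ ClosedSubst R

/-- `Subterm t s` : `t` is a subterm of `s`. -/
inductive Subterm : Term F ar V → Term F ar V → Prop where
  | refl {t} : Subterm t t
  | arg {t f ss} (i : Fin (ar f)) : Subterm t (ss i) → Subterm t (Term.app f ss)

/-- `ProperSubterm t s` : `t` is a proper subterm of `s`. -/
def ProperSubterm (t s : Term F ar V) : Prop :=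
  ∃ (f : F) (ss : Fin (ar f) → Term F ar V) (i : Fin (ar f)),
    s = Term.app f ss ∧ Subterm t (ss i)

/-- The rewrite relation of a TRS `R`: closure of the rules under substitutions and contexts. -/
inductive Rewrite (R : Set (Term F ar V × Term F ar V)) : Term F ar V → Term F ar V → Prop where
  | rule {l r} (σ : V → Term F ar V) : (l, r) ∈ R → Rewrite R (l.subst σ) (r.subst σ)
  | ctx {s t} (f : F) (args : Fin (ar f) → Term F ar V) (i : Fin (ar f)) :
      Rewrite R s t →
      Rewrite R (Term.app f (Function.update args i s)) (Term.app f (Function.update args i t))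

end Props

section Pair

variable {F V A : Type} (ar : F → ℕ) (I : (f : F) → (Fin (ar f) → A) → A)
  (lt : A → A → Prop) (prec : F → F → Prop)

/-- `s ⊒∼ t` : both non-variable, and `s >_A t`, or `s ≥_A t` and `root(s) ≿ root(t)`. -/
def QGE (s t : Term F ar V) : Prop :=
  ∃ (f : F) (ss : Fin (ar f) → Term F ar V) (g : F) (ts : Fin (ar g) → Term F ar V),
    s = Term.app f ss ∧ t = Term.app g ts ∧
      (GTA ar I lt s t ∨ (GEA ar I lt s t ∧ prec f g))

/-- `s ⊐ t` : both non-variable, and `s >_A t`, or `s ≥_A t` and `root(s) ≻ root(t)`. -/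
def QGT (s t : Term F ar V) : Prop :=
  ∃ (f : F) (ss : Fin (ar f) → Term F ar V) (g : F) (ts : Fin (ar g) → Term F ar V),
    s = Term.app f ss ∧ t = Term.app g ts ∧
      (GTA ar I lt s t ∨ (GEA ar I lt s t ∧ prec f g ∧ ¬ prec g f))

variable (Im : (f : F) → (Fin (ar f) → A) → A)

/-- Interpretation of the marked term `t♯` (root symbol interpreted by `Im`). -/
def evalSharp (α : V → A) : Term F ar V → A
  | .var v => α v
  | .app f ts => Im f (fun i => (ts i).eval I α)

/-- `s♯ >_A t♯`. -/
def GTAS (s t : Term F ar V) : Prop :=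
  ∀ α : V → A, lt (evalSharp ar I Im α t) (evalSharp ar I Im α s)

/-- `s♯ ≥_A t♯`. -/
def GEAS (s t : Term F ar V) : Prop :=
  ∀ α : V → A, RC lt (evalSharp ar I Im α t) (evalSharp ar I Im α s)

/-- Marked version of `⊒∼` : `s♯ >_A t♯`, or `s♯ ≥_A t♯` and `root(s) ≿ root(t)`. -/
def QGES (s t : Term F ar V) : Prop :=
  ∃ (f : F) (ss : Fin (ar f) → Term F ar V) (g : F) (ts : Fin (ar g) → Term F ar V),
    s = Term.app f ss ∧ t = Term.app g ts ∧
      (GTAS ar I lt Im s t ∨ (GEAS ar I lt Im s t ∧ prec f g))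

/-- Marked version of `⊐` : `s♯ >_A t♯`, or `s♯ ≥_A t♯` and `root(s) ≻ root(t)`. -/
def QGTS (s t : Term F ar V) : Prop :=
  ∃ (f : F) (ss : Fin (ar f) → Term F ar V) (g : F) (ts : Fin (ar g) → Term F ar V),
    s = Term.app f ss ∧ t = Term.app g ts ∧
      (GTAS ar I lt Im s t ∨ (GEAS ar I lt Im s t ∧ prec f g ∧ ¬ prec g f))

/-- The generalized weighted path order: `s ≥_A t` and `s >_spo t` for the SPO induced
from the marked order pair. -/
def GWPO (s t : Term F ar V) : Prop :=
  GEA ar I lt s t ∧ SPO (QGES ar I lt prec Im) (QGTS ar I lt prec Im) s t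

end Pair

namespace Term

variable {F V : Type} {ar : F → ℕ}

def size : Term F ar V → ℕ
  | var _ => 1
  | app _ args => 1 + ∑ i, (args i).size

theorem size_lt_size_app {f : F} (args : Fin (ar f) → Term F ar V) (i : Fin (ar f)) :
    (args i).size < (app f args).size := by
  have := Finset.single_le_sum (f := fun j => (args j).size) (fun _ _ => Nat.zero_le _)
    (Finset.mem_univ i)
  simp only [size]
  omega

theorem size_lt_of_mem_ofFn {f : F} {args : Fin (ar f) → Term F ar V} {x : Term F ar V}
    (hx : x ∈ List.ofFn args) : x.size < (app f args).size := by
  obtain ⟨i, rfl⟩ := List.mem_ofFn.mp hx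
  exact size_lt_size_app args i

theorem eval_subst {A : Type} (I : (f : F) → (Fin (ar f) → A) → A) (α : V → A)
    (σ : V → Term F ar V) (t : Term F ar V) :
    (t.subst σ).eval I α = t.eval I (fun v => (σ v).eval I α) := by
  induction t with
  | var v => rfl
  | app f args ih => simp only [subst, eval, ih]

theorem eval_app_update {A : Type} (I : (f : F) → (Fin (ar f) → A) → A) (α : V → A) {f : F}
    (args : Fin (ar f) → Term F ar V) (i : Fin (ar f)) (s : Term F ar V) :
    (app f (Function.update args i s)).eval I α =
      I f (Function.update (fun j => (args j).eval I α) i (s.eval I α)) := by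
  simp only [eval]
  congr 1
  funext j
  exact Function.apply_update (fun _ t => t.eval I α) args i s j

end Term

namespace List

variable {α : Type*} {r : α → α → Prop}

theorem Lex.trans_of_mem : ∀ {l₁ l₂ l₃ : List α},
    (∀ x ∈ l₁, ∀ y ∈ l₂, ∀ z ∈ l₃, r x y → r y z → r x z) →
      Lex r l₁ l₂ → Lex r l₂ l₃ → Lex r l₁ l₃
  | _, _, _, _, .nil, .cons _ => .nil
  | _, _, _, _, .nil, .rel _ => .nil
  | _ :: _, _ :: _, _ :: _, H, .cons h₁, .cons h₂ =>
    .cons (trans_of_mem (fun x hx y hy z hz =>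
      H x (mem_cons_of_mem _ hx) y (mem_cons_of_mem _ hy) z (mem_cons_of_mem _ hz)) h₁ h₂)
  | _, _, _, _, .cons _, .rel h₂ => .rel h₂
  | _, _, _, _, .rel h₁, .cons _ => .rel h₁
  | _, _, _, H, .rel h₁, .rel h₂ => .rel (H _ mem_cons_self _ mem_cons_self _ mem_cons_self h₁ h₂)

theorem lex_ofFn_of_rel : ∀ {n : ℕ} (g₁ g₂ : Fin n → α) (i : Fin n),
    (∀ j < i, g₁ j = g₂ j) → r (g₁ i) (g₂ i) → Lex r (ofFn g₁) (ofFn g₂)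
  | 0, _, _, i, _, _ => i.elim0
  | n + 1, g₁, g₂, i, h_eq, h => by
    rw [ofFn_succ, ofFn_succ]
    cases i using Fin.cases with
    | zero => exact .rel h
    | succ i =>
      rw [h_eq 0 (Fin.succ_pos i)]
      exact .cons (lex_ofFn_of_rel _ _ i (fun j hj => h_eq j.succ (Fin.succ_lt_succ_iff.mpr hj)) h)

-- Without the length bound `Lex` is not well-founded: `[b] > [a, b] > [a, a, b] > ⋯` if `a < b`.
def BoundedLex (r : α → α → Prop) (n : ℕ) (l₁ l₂ : List α) : Prop :=
  Lex r l₁ l₂ ∧ l₁.length ≤ n ∧ ∀ x ∈ l₁, Acc r x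

theorem acc_boundedLex_nil (n : ℕ) : Acc (BoundedLex r n) [] :=
  .intro _ fun _ h => nomatch h.1

theorem acc_boundedLex_cons {n : ℕ}
    (ih : ∀ l : List α, (∀ x ∈ l, Acc r x) → Acc (BoundedLex r n) l) {a : α} (ha : Acc r a) :
    ∀ {l : List α}, Acc (BoundedLex r n) l → (∀ x ∈ l, Acc r x) →
      Acc (BoundedLex r (n + 1)) (a :: l) := by
  induction ha with
  | intro a _ iha =>
  intro l hl
  induction hl with
  | intro l _ ihl =>
  intro hmem
  refine .intro _ fun l' ⟨hlex, hlen, hacc⟩ => ?_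
  cases hlex with
  | nil => exact acc_boundedLex_nil _
  | cons h =>
    have hacc' := (forall_mem_cons.mp hacc).2
    exact ihl _ ⟨h, Nat.le_of_succ_le_succ hlen, hacc'⟩ hacc'
  | rel h =>
    have hacc' := (forall_mem_cons.mp hacc).2
    exact iha _ h (ih _ hacc') hacc'

theorem wellFounded_boundedLex (r : α → α → Prop) (n : ℕ) : WellFounded (BoundedLex r n) := by
  suffices ∀ l : List α, (∀ x ∈ l, Acc r x) → Acc (BoundedLex r n) l from
    ⟨fun l => .intro l fun l' hl' => this l' hl'.2.2⟩
  induction n with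
  | zero =>
    refine fun l _ => .intro l fun l' ⟨_, hlen, _⟩ => ?_
    rw [length_eq_zero_iff.mp (Nat.le_zero.mp hlen)]
    exact acc_boundedLex_nil 0
  | succ n ih =>
    rintro (_ | ⟨a, l⟩) hmem
    · exact acc_boundedLex_nil _
    · obtain ⟨ha, hl⟩ := forall_mem_cons.mp hmem
      exact acc_boundedLex_cons ih ha (ih l hl) hl

end List

theorem wellFounded_strictPrec {F : Type} [Finite F] {prec : F → F → Prop}
    (prec_trans : ∀ f g h, prec f g → prec g h → prec f h) :
    WellFounded (fun g f => prec f g ∧ ¬ prec g f) :=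
  have : IsTrans F (fun g f => prec f g ∧ ¬ prec g f) :=
    ⟨fun _ _ _ ⟨h₁, _⟩ ⟨h₃, h₄⟩ =>
      ⟨prec_trans _ _ _ h₃ h₁, fun hc => h₄ (prec_trans _ _ _ h₁ hc)⟩⟩
  have : Std.Irrefl (fun g f => prec f g ∧ ¬ prec g f) := ⟨fun _ h => h.2 h.1⟩
  Finite.wellFounded_of_trans_of_irrefl _

section Algebra

variable {F V A : Type} {ar : F → ℕ} {I : (f : F) → (Fin (ar f) → A) → A}
  {lt : A → A → Prop} {s t u : Term F ar V}

theorem GEA.trans (lt_trans : Transitive lt) (h₁ : GEA ar I lt s t) (h₂ : GEA ar I lt t u) :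
    GEA ar I lt s u := fun α =>
  (h₂ α).elim (fun h => .inl ((h₁ α).elim (lt_trans h) (· ▸ h))) (· ▸ h₁ α)

theorem GTA.trans_gea (lt_trans : Transitive lt) (h₁ : GTA ar I lt s t) (h₂ : GEA ar I lt t u) :
    GTA ar I lt s u := fun α =>
  (h₂ α).elim (fun h => lt_trans h (h₁ α)) (· ▸ h₁ α)

theorem GEA.trans_gta (lt_trans : Transitive lt) (h₁ : GEA ar I lt s t) (h₂ : GTA ar I lt t u) :
    GTA ar I lt s u := fun α =>
  (h₁ α).elim (lt_trans (h₂ α)) (· ▸ h₂ α)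

theorem GTA.subst (σ : V → Term F ar V) (h : GTA ar I lt s t) :
    GTA ar I lt (s.subst σ) (t.subst σ) := fun α => by
  simpa only [Term.eval_subst] using h _

theorem GEA.subst (σ : V → Term F ar V) (h : GEA ar I lt s t) :
    GEA ar I lt (s.subst σ) (t.subst σ) := fun α => by
  simpa only [Term.eval_subst] using h _

theorem GEA.app_update (hmono : WeaklyMonotone ar I lt) (h : GEA ar I lt s t) {f : F}
    (args : Fin (ar f) → Term F ar V) (i : Fin (ar f)) :
    GEA ar I lt (.app f (Function.update args i s)) (.app f (Function.update args i t)) := by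
  intro α
  rw [Term.eval_app_update, Term.eval_app_update]
  rcases h α with hlt | heq
  · simpa using hmono f (Function.update (fun j => (args j).eval I α) i (s.eval I α)) i
      (t.eval I α) (by rwa [Function.update_self])
  · exact .inr (heq ▸ rfl)

theorem gea_app_arg (hsimple : Simple ar I lt) {f : F} (args : Fin (ar f) → Term F ar V)
    (i : Fin (ar f)) : GEA ar I lt (.app f args) (args i) :=
  fun α => hsimple f (fun j => (args j).eval I α) i

end Algebra

section WPO

variable {F V A : Type} {ar : F → ℕ} {I : (f : F) → (Fin (ar f) → A) → A}
  {lt : A → A → Prop} {prec : F → F → Prop}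

theorem WPO.gea {s t : Term F ar V} : WPO ar I lt prec s t → GEA ar I lt s t
  | .alg h => fun α => .inl (h α)
  | .sub _ h _ | .subEq _ h _ | .prc h _ _ _ | .lex h _ _ _ => h

theorem wpoLex_iff_lex : ∀ {l₁ l₂ : List (Term F ar V)},
    WPOLex ar I lt prec l₁ l₂ ↔ List.Lex (flip (WPO ar I lt prec)) l₂ l₁
  | [], _ => iff_of_false (fun h => nomatch h) (fun h => nomatch h)
  | _ :: _, [] => ⟨fun _ => .nil, fun _ => .longer⟩
  | _ :: _, _ :: _ => by
    rw [List.cons_lex_cons_iff, ← wpoLex_iff_lex]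
    constructor
    · rintro (⟨h⟩ | ⟨h⟩)
      exacts [.inl h, .inr ⟨rfl, h⟩]
    · rintro (h | ⟨rfl, h⟩)
      exacts [.head h, .tail h]

theorem WPO.trans (lt_trans : Transitive lt)
    (prec_trans : ∀ f g h, prec f g → prec g h → prec f h) {s t u : Term F ar V} :
    WPO ar I lt prec s t → WPO ar I lt prec t u → WPO ar I lt prec s u
  | .alg hst, h₂ => .alg (hst.trans_gea lt_trans h₂.gea)
  | .sub i hge hw, h₂ => .sub i (hge.trans lt_trans h₂.gea) (hw.trans lt_trans prec_trans h₂)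
  | .subEq i hge heq, h₂ => .sub i (hge.trans lt_trans h₂.gea) (heq ▸ h₂)
  | h₁@(.prc ..), .alg htu | h₁@(.lex ..), .alg htu => .alg (h₁.gea.trans_gta lt_trans htu)
  | .prc _ hall _ _, .sub j _ hw | .lex _ hall _ _, .sub j _ hw =>
    (hall j).trans lt_trans prec_trans hw
  | .prc _ hall _ _, .subEq j _ heq | .lex _ hall _ _, .subEq j _ heq => heq ▸ hall j
  | h₁@(.prc hge _ hfg _), .prc hge₂ hall₂ hgh hnhg =>
    .prc (hge.trans lt_trans hge₂) (fun k => h₁.trans lt_trans prec_trans (hall₂ k))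
      (prec_trans _ _ _ hfg hgh) (fun hc => hnhg (prec_trans _ _ _ hc hfg))
  | h₁@(.prc hge _ hfg hngf), .lex hge₂ hall₂ hgh _ =>
    .prc (hge.trans lt_trans hge₂) (fun k => h₁.trans lt_trans prec_trans (hall₂ k))
      (prec_trans _ _ _ hfg hgh) (fun hc => hngf (prec_trans _ _ _ hgh hc))
  | h₁@(.lex hge _ hfg _), .prc hge₂ hall₂ hgh hnhg =>
    .prc (hge.trans lt_trans hge₂) (fun k => h₁.trans lt_trans prec_trans (hall₂ k))
      (prec_trans _ _ _ hfg hgh) (fun hc => hnhg (prec_trans _ _ _ hc hfg))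
  | h₁@(.lex hge _ hfg hlex), .lex hge₂ hall₂ hgh hlex₂ =>
    .lex (hge.trans lt_trans hge₂) (fun k => h₁.trans lt_trans prec_trans (hall₂ k))
      (prec_trans _ _ _ hfg hgh) <| wpoLex_iff_lex.mpr <|
        List.Lex.trans_of_mem (fun z _ y _ x _ hzy hyx => hyx.trans lt_trans prec_trans hzy)
          (wpoLex_iff_lex.mp hlex₂) (wpoLex_iff_lex.mp hlex)
termination_by s.size + t.size + u.size
decreasing_by
  all_goals simp_wf
  all_goals first
    | exact Term.size_lt_size_app _ _
    | have := Term.size_lt_of_mem_ofFn ‹x ∈ _›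
      have := Term.size_lt_of_mem_ofFn ‹y ∈ _›
      have := Term.size_lt_of_mem_ofFn ‹z ∈ _›
      omega

mutual

theorem WPO.subst (σ : V → Term F ar V) {s t : Term F ar V} :
    WPO ar I lt prec s t → WPO ar I lt prec (s.subst σ) (t.subst σ)
  | .alg h => .alg (h.subst σ)
  | .sub i hge hw => .sub i (hge.subst σ) (hw.subst σ)
  | .subEq i hge heq => .subEq i (hge.subst σ) (congrArg (Term.subst σ) heq)
  | .prc hge hall hfg hngf => .prc (hge.subst σ) (fun j => (hall j).subst σ) hfg hngf
  | .lex hge hall hfg hlex => .lex (hge.subst σ) (fun j => (hall j).subst σ) hfg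
      (by simpa [List.map_ofFn, Function.comp_def] using hlex.map_subst σ)

theorem WPOLex.map_subst (σ : V → Term F ar V) {l₁ l₂ : List (Term F ar V)} :
    WPOLex ar I lt prec l₁ l₂ →
      WPOLex ar I lt prec (l₁.map (Term.subst σ)) (l₂.map (Term.subst σ))
  | .head h => .head (h.subst σ)
  | .tail h => .tail (h.map_subst σ)
  | .longer => .longer

end

theorem WPO.closedCtx (lt_trans : Transitive lt) (hsimple : Simple ar I lt)
    (hmono : WeaklyMonotone ar I lt) (prec_refl : ∀ f, prec f f) :
    ClosedCtx (WPO (V := V) ar I lt prec) := by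
  intro f args i s t h
  refine .lex (h.gea.app_update hmono args i) (fun j => ?_) (prec_refl f) ?_
  · by_cases hj : j = i
    · subst hj
      have hge := gea_app_arg hsimple (Function.update args j s) j
      rw [Function.update_self] at hge ⊢
      exact .sub j (hge.trans lt_trans h.gea) (by rwa [Function.update_self])
    · have hge := gea_app_arg hsimple (Function.update args i s) j
      rw [Function.update_of_ne hj] at hge ⊢
      exact .subEq j hge (Function.update_of_ne hj _ _)
  · refine wpoLex_iff_lex.mpr (List.lex_ofFn_of_rel _ _ i (fun j hj => ?_) ?_)
    · simp only [Function.update_of_ne hj.ne]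
    · simpa [flip] using h

end WPO

section WellFounded

variable {F V A : Type} {ar : F → ℕ} {I : (f : F) → (Fin (ar f) → A) → A}
  {lt : A → A → Prop} {prec : F → F → Prop}

local notation "WPOAcc" => Acc (flip (WPO ar I lt prec))

theorem WPO.acc_app_of_acc_below (α₀ : V → A) {g : F} {ss : Fin (ar g) → Term F ar V}
    (hss : ∀ i, WPOAcc (ss i))
    (h_lt : ∀ t, lt (t.eval I α₀) ((Term.app g ss).eval I α₀) → WPOAcc t)
    (h_prec : ∀ h ts, (∀ j, WPOAcc (ts j)) →
      (Term.app h ts).eval I α₀ = (Term.app g ss).eval I α₀ → prec g h → ¬ prec h g →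
        WPOAcc (Term.app h ts))
    (h_lex : ∀ h ts, (∀ j, WPOAcc (ts j)) →
      (Term.app h ts).eval I α₀ = (Term.app g ss).eval I α₀ → prec g h → prec h g →
        WPOLex ar I lt prec (List.ofFn ss) (List.ofFn ts) → WPOAcc (Term.app h ts)) :
    WPOAcc (Term.app g ss) := by
  refine .intro _ fun t ht => ?_
  induction t with
  | var v =>
    cases ht with
    | alg h => exact h_lt _ (h α₀)
    | sub i _ hw => exact (hss i).inv hw
    | subEq i _ heq => exact heq ▸ hss i
  | app h ts ih =>
    cases ht with
    | alg h => exact h_lt _ (h α₀)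
    | sub i _ hw => exact (hss i).inv hw
    | subEq i _ heq => exact heq ▸ hss i
    | prc hge hall hgh hnhg =>
      rcases hge α₀ with hlt | heq
      · exact h_lt _ hlt
      · exact h_prec h ts (fun j => ih j (hall j)) heq hgh hnhg
    | lex hge hall hgh hlex =>
      rcases hge α₀ with hlt | heq
      · exact h_lt _ hlt
      · by_cases hhg : prec h g
        · exact h_lex h ts (fun j => ih j (hall j)) heq hgh hhg hlex
        · exact h_prec h ts (fun j => ih j (hall j)) heq hgh hhg

theorem WPO.acc_app_of_prec_equiv (prec_trans : ∀ f g h, prec f g → prec g h → prec f h)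
    (α₀ : V → A) {N : ℕ} (hN : ∀ f, ar f ≤ N) {a : A}
    (h_lt : ∀ t, lt (t.eval I α₀) a → WPOAcc t) {g : F}
    (h_prec : ∀ h ts, (∀ j, WPOAcc (ts j)) → (Term.app h ts).eval I α₀ = a → prec g h →
      ¬ prec h g → WPOAcc (Term.app h ts))
    {g' : F} (hgg' : prec g g') (hg'g : prec g' g) {ss : Fin (ar g') → Term F ar V}
    (hss : ∀ i, WPOAcc (ss i)) (ha : (Term.app g' ss).eval I α₀ = a) :
    WPOAcc (Term.app g' ss) := by
  generalize hl : List.ofFn ss = l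
  induction (List.wellFounded_boundedLex (flip (WPO ar I lt prec)) N).apply l
    generalizing g' ss with
  | intro l _ ih =>
  subst hl ha
  refine WPO.acc_app_of_acc_below α₀ hss h_lt (fun h ts hts heq hg'h hnhg' => ?_)
    (fun h ts hts heq hg'h hhg' hlex => ?_)
  · exact h_prec h ts hts heq (prec_trans _ _ _ hgg' hg'h)
      (fun hhg => hnhg' (prec_trans _ _ _ hhg hgg'))
  · refine ih _ ⟨wpoLex_iff_lex.mp hlex, ?_, ?_⟩ (prec_trans _ _ _ hgg' hg'h)
      (prec_trans _ _ _ hhg' hg'g) hts heq rfl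
    · simpa using hN h
    · simpa [List.mem_ofFn] using hts

theorem WPO.acc_app_of_eval_eq [Finite F] (prec_refl : ∀ f, prec f f)
    (prec_trans : ∀ f g h, prec f g → prec g h → prec f h) (α₀ : V → A) {a : A}
    (h_lt : ∀ t, lt (t.eval I α₀) a → WPOAcc t) (g : F)
    (ss : Fin (ar g) → Term F ar V) (hss : ∀ i, WPOAcc (ss i))
    (ha : (Term.app g ss).eval I α₀ = a) : WPOAcc (Term.app g ss) := by
  obtain ⟨N, hN⟩ := Finite.exists_le ar
  induction g using (wellFounded_strictPrec prec_trans).induction with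
  | _ g ih =>
  exact WPO.acc_app_of_prec_equiv prec_trans α₀ hN h_lt
    (fun h ts hts ha' hgh hnhg => ih h ⟨hgh, hnhg⟩ ts hts ha') (prec_refl g) (prec_refl g) hss ha

theorem WPO.wellFounded [Finite F] [Nonempty A] (lt_wf : WellFounded lt)
    (hsimple : Simple ar I lt) (prec_refl : ∀ f, prec f f)
    (prec_trans : ∀ f g h, prec f g → prec g h → prec f h) :
    WellFounded (flip (WPO (V := V) ar I lt prec)) := by
  let α₀ : V → A := fun _ => Classical.arbitrary A
  suffices ∀ a t, t.eval I α₀ = a → WPOAcc t from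
    ⟨fun t => this _ t rfl⟩
  intro a
  induction a using lt_wf.induction with
  | _ a ih =>
  have h_lt : ∀ t, lt (t.eval I α₀) a → WPOAcc t :=
    fun t ht => ih _ ht t rfl
  intro t
  induction t with
  | var v =>
    rintro rfl
    exact .intro _ fun t ht => by cases ht with | alg h => exact h_lt t (h α₀)
  | app f ss ih_args =>
    intro ha
    refine WPO.acc_app_of_eval_eq prec_refl prec_trans α₀ h_lt f ss (fun i => ?_) ha
    rcases hsimple f (fun j => (ss j).eval I α₀) i with hlt | heq
    · exact h_lt _ (ha ▸ hlt)
    · exact ih_args i (heq.trans ha)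

end WellFounded

/-- For a finite signature `F`, a precedence `prec` (a quasi-order on `F`),
and a simple monotone well-founded ordered `F`-algebra `(A, I, lt)`, the induced weighted
path order is a reduction order. -/
theorem wpo_is_reduction_order
    {F V A : Type} [Fintype F] [Countable V] [Infinite V] [Nonempty A]
    (ar : F → ℕ) (I : (f : F) → (Fin (ar f) → A) → A) (lt : A → A → Prop)
    (lt_irrefl : ∀ a, ¬ lt a a) (lt_trans : Transitive lt)
    (lt_wf : WellFounded lt)
    (hsimple : Simple ar I lt) (hmono : WeaklyMonotone ar I lt)
    (prec : F → F → Prop) (prec_refl : ∀ f, prec f f)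
    (prec_trans : ∀ f g h, prec f g → prec g h → prec f h) :
    ReductionOrder (WPO (V := V) ar I lt prec) := by
  have wf := WPO.wellFounded (V := V) lt_wf hsimple prec_refl prec_trans
  exact ⟨wf.irrefl.irrefl, fun _ _ _ => WPO.trans lt_trans prec_trans, wf,
    WPO.closedCtx lt_trans hsimple hmono prec_refl, fun σ _ _ => WPO.subst σ⟩
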